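/- Let v_R(X) = V_R(R − √(|x'|² + (x_n − R)²), z) where V_R(t,z) = U(t,z)((n−1)t/R + 1). There exists R₀ (depending on n, α) such that for all R ≥ R₀, Δ v_R + β (∂_z v_R)/z ≥ 0 on B₂ ∖ {z = 0} wherever v_R > 0; i.e., v_R is a subsolution of the weighted equation. The required inequality reduces to R ≥ 2t + (n−1)² t + ((n−1)/α) r where t = R − ρ, ρ = √(|x'|² + (x_n−R)²), r = √(t² + z²), using ∂_t U = αU/r. -/

import Mathlib

noncomputable def hh (t z : ℝ) : ℝ :=
  Real.sqrt (Real.sqrt (t ^ 2 + z ^ 2)) * Real.cos (Complex.arg (t + z * Complex.I) / 2)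

noncomputable def UU (α t z : ℝ) : ℝ := hh t z ^ (2 * α)

/-- `V_R(t,z) = U(t,z)((n-1)t/R + 1)` with `n = m+1`. -/
noncomputable def VV (α : ℝ) (n : ℕ) (R t z : ℝ) : ℝ :=
  UU α t z * (((n : ℝ) - 1) * t / R + 1)

/-- The rotated subsolution `v_R(X) = V_R(R - √(|x'|² + (x_n - R)²), z)`,
where `X = (x', x_n, z) ∈ ℝ^{m} × ℝ × ℝ` (so the ambient dimension is `n+1 = m+2`). -/
noncomputable def vR (α : ℝ) (m : ℕ) (R : ℝ) (p : (Fin m → ℝ) × ℝ × ℝ) : ℝ :=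
  VV α (m + 1) R (R - Real.sqrt ((∑ i, p.1 i ^ 2) + (p.2.1 - R) ^ 2)) p.2.2

variable {m : ℕ}

noncomputable def qxx (g : (Fin m → ℝ) × ℝ × ℝ → ℝ) (i : Fin m)
    (p : (Fin m → ℝ) × ℝ × ℝ) : ℝ :=
  deriv (fun s => deriv (fun u => g (Function.update p.1 i u, p.2.1, p.2.2)) s) (p.1 i)

noncomputable def qnn (g : (Fin m → ℝ) × ℝ × ℝ → ℝ) (p : (Fin m → ℝ) × ℝ × ℝ) : ℝ :=
  deriv (fun s => deriv (fun u => g (p.1, u, p.2.2)) s) p.2.1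

noncomputable def qz (g : (Fin m → ℝ) × ℝ × ℝ → ℝ) (p : (Fin m → ℝ) × ℝ × ℝ) : ℝ :=
  deriv (fun s => g (p.1, p.2.1, s)) p.2.2

noncomputable def qzz (g : (Fin m → ℝ) × ℝ × ℝ → ℝ) (p : (Fin m → ℝ) × ℝ × ℝ) : ℝ :=
  deriv (fun s => deriv (fun u => g (p.1, p.2.1, u)) s) p.2.2

/-! `U = (Re √(t + iz))^(2α)` solves `U_tt + U_zz + β U_z / z = 0` off `z = 0`, with
`U_t = α U / r`. As `v_R` is radial in `(x', x_n)` about `(0, R)`, its Laplacian there is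
`f'' + m f' / ρ` for the profile `f ρ = V_R(R - ρ, z)`. Writing `V_R = U φ`, `φ t = m t / R + 1`,
the equation for `U` absorbs all second derivatives of `U`, leaving
`m U / (R ρ r) * (α (R - (m + 2) t) - m r)`. On `B₂` we have `t < 2` and `r < 3`, so this is
nonnegative once `α R ≥ 2 α (m + 2) + 3 m`. -/

lemma UU_eq_rpow (α t z : ℝ) : UU α t z = ((√(t ^ 2 + z ^ 2) + t) / 2) ^ α := by
  have hq : 0 ≤ (√(t ^ 2 + z ^ 2) + t) / 2 := by
    linarith [neg_abs_le t, Real.abs_le_sqrt (le_add_of_nonneg_right (sq_nonneg z) : t ^ 2 ≤ _)]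
  suffices hh t z = √((√(t ^ 2 + z ^ 2) + t) / 2) by
    rw [UU, this, Real.sqrt_eq_rpow, ← Real.rpow_mul hq]
    ring_nf
  rcases eq_or_ne (t + z * Complex.I : ℂ) 0 with hw | hw
  · obtain ⟨rfl, rfl⟩ : t = 0 ∧ z = 0 := by simpa [Complex.ext_iff] using hw
    simp [hh]
  have hnorm : ‖(t + z * Complex.I : ℂ)‖ = √(t ^ 2 + z ^ 2) := by
    rw [Complex.norm_def, Complex.normSq_add_mul_I]
  have hr : 0 < √(t ^ 2 + z ^ 2) := hnorm ▸ norm_pos_iff.mpr hw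
  rw [hh, Real.cos_half (Complex.neg_pi_lt_arg _).le (Complex.arg_le_pi _), Complex.cos_arg hw,
    hnorm, ← Real.sqrt_mul hr.le]
  congr 1
  simp only [Complex.add_re, Complex.ofReal_re, Complex.mul_re, Complex.I_re, Complex.I_im,
    Complex.ofReal_im]
  field_simp
  ring

lemma sqrt_sq_add_sq_add_pos (t : ℝ) {z : ℝ} (hz : z ≠ 0) : 0 < √(t ^ 2 + z ^ 2) + t := by
  have : |t| < √(t ^ 2 + z ^ 2) := by
    rw [← Real.sqrt_sq_eq_abs]
    exact Real.sqrt_lt_sqrt (sq_nonneg t) (lt_add_of_pos_right _ (by positivity))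
  linarith [neg_abs_le t]

lemma UU_pos (α t : ℝ) {z : ℝ} (hz : z ≠ 0) : 0 < UU α t z := by
  have := sqrt_sq_add_sq_add_pos t hz
  rw [UU_eq_rpow]
  positivity

lemma hasDerivAt_sqrt_sq_add {A u : ℝ} (h : u ^ 2 + A ≠ 0) :
    HasDerivAt (fun v => √(v ^ 2 + A)) (u / √(u ^ 2 + A)) u := by
  convert ((hasDerivAt_pow 2 u).add_const A).sqrt h using 1
  field_simp
  ring

lemma hasDerivAt_sqrt_add_sq {A u : ℝ} (h : A + u ^ 2 ≠ 0) :
    HasDerivAt (fun v => √(A + v ^ 2)) (u / √(A + u ^ 2)) u := by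
  convert ((hasDerivAt_pow 2 u).const_add A).sqrt h using 1
  field_simp
  ring

section Derivatives

variable (α : ℝ) {z : ℝ}

lemma hasDerivAt_UU_fst (t : ℝ) (hz : z ≠ 0) :
    HasDerivAt (UU α · z) (α * UU α t z / √(t ^ 2 + z ^ 2)) t := by
  have hq := sqrt_sq_add_sq_add_pos t hz
  simp only [UU_eq_rpow]
  have hsq := hasDerivAt_sqrt_sq_add (A := z ^ 2) (u := t) (by positivity)
  refine (((hsq.fun_add (hasDerivAt_id' t)).div_const 2).rpow_const (p := α)
    (Or.inl (by positivity))).congr_deriv ?_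
  rw [Real.rpow_sub_one (by positivity)]
  field_simp
  ring

lemma hasDerivAt_UU_snd (t : ℝ) (hz : z ≠ 0) :
    HasDerivAt (UU α t ·) (α * UU α t z * z / (√(t ^ 2 + z ^ 2) * (√(t ^ 2 + z ^ 2) + t))) z := by
  have hq := sqrt_sq_add_sq_add_pos t hz
  simp only [UU_eq_rpow]
  have hsq := hasDerivAt_sqrt_add_sq (A := t ^ 2) (u := z) (by positivity)
  refine (((hsq.add_const t).div_const 2).rpow_const (p := α)
    (Or.inl (by positivity))).congr_deriv ?_
  rw [Real.rpow_sub_one (by positivity)]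
  field_simp

lemma hasDerivAt_deriv_UU_fst (t : ℝ) (hz : z ≠ 0) :
    HasDerivAt (fun s => α * UU α s z / √(s ^ 2 + z ^ 2))
      (α * UU α t z * (α * √(t ^ 2 + z ^ 2) - t) / √(t ^ 2 + z ^ 2) ^ 3) t := by
  have hr : 0 < √(t ^ 2 + z ^ 2) := by positivity
  have hsq := hasDerivAt_sqrt_sq_add (A := z ^ 2) (u := t) (by positivity)
  refine (((hasDerivAt_UU_fst α t hz).const_mul α).div hsq hr.ne').congr_deriv ?_
  field_simp

lemma hasDerivAt_deriv_UU_snd (t : ℝ) (hz : z ≠ 0) :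
    HasDerivAt (fun s => α * UU α t s * s / (√(t ^ 2 + s ^ 2) * (√(t ^ 2 + s ^ 2) + t)))
      (α * UU α t z * (α * √(t ^ 2 + z ^ 2) * (√(t ^ 2 + z ^ 2) - t) + t ^ 2
          + √(t ^ 2 + z ^ 2) * t - √(t ^ 2 + z ^ 2) ^ 2)
        / (√(t ^ 2 + z ^ 2) ^ 3 * (√(t ^ 2 + z ^ 2) + t))) z := by
  have hq := sqrt_sq_add_sq_add_pos t hz
  have hr : 0 < √(t ^ 2 + z ^ 2) := by positivity
  have hr2 : √(t ^ 2 + z ^ 2) ^ 2 = t ^ 2 + z ^ 2 := Real.sq_sqrt (by positivity)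
  have hsq := hasDerivAt_sqrt_add_sq (A := t ^ 2) (u := z) (by positivity)
  refine ((((hasDerivAt_UU_snd α t hz).const_mul α).fun_mul (hasDerivAt_id' z)).fun_div
    (hsq.fun_mul (hsq.add_const t)) (by positivity)).congr_deriv ?_
  field_simp
  linear_combination α * UU α t z * ((2 - α) * √(t ^ 2 + z ^ 2) + t) * hr2

lemma deriv_UU_fst (hz : z ≠ 0) :
    deriv (UU α · z) = fun t => α * UU α t z / √(t ^ 2 + z ^ 2) :=
  funext fun t => (hasDerivAt_UU_fst α t hz).deriv

lemma UU_equation (t : ℝ) (hz : z ≠ 0) :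
    deriv (deriv (UU α · z)) t + deriv (deriv (UU α t ·)) z
      + (1 - 2 * α) * deriv (UU α t ·) z / z = 0 := by
  have hderiv_snd : deriv (UU α t ·) =ᶠ[nhds z]
      fun s => α * UU α t s * s / (√(t ^ 2 + s ^ 2) * (√(t ^ 2 + s ^ 2) + t)) := by
    filter_upwards [isOpen_ne.mem_nhds hz] with s hs using (hasDerivAt_UU_snd α t hs).deriv
  have hq := sqrt_sq_add_sq_add_pos t hz
  have hr : 0 < √(t ^ 2 + z ^ 2) := by positivity
  rw [deriv_UU_fst α hz, (hasDerivAt_deriv_UU_fst α t hz).deriv, hderiv_snd.deriv_eq,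
    (hasDerivAt_deriv_UU_snd α t hz).deriv, (hasDerivAt_UU_snd α t hz).deriv]
  field_simp
  ring

end Derivatives

lemma deriv_deriv_comp_sqrt_add_sq {f : ℝ → ℝ} {A u ρ : ℝ} (hρ : 0 < ρ) (hAu : A + u ^ 2 = ρ ^ 2)
    (hf : Differentiable ℝ f) (hf' : DifferentiableAt ℝ (deriv f) ρ) :
    deriv (fun s => deriv (fun v => f √(A + v ^ 2)) s) u
      = deriv (deriv f) ρ * u ^ 2 / ρ ^ 2 + deriv f ρ * (ρ ^ 2 - u ^ 2) / ρ ^ 3 := by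
  have hsqrt : √(A + u ^ 2) = ρ := by rw [hAu, Real.sqrt_sq hρ.le]
  have hpos : ∀ᶠ v in nhds u, A + v ^ 2 ≠ 0 :=
    (by fun_prop : Continuous fun v : ℝ => A + v ^ 2).continuousAt.eventually_ne
      (by rw [hAu]; positivity : A + u ^ 2 ≠ 0)
  have hinner : (fun s => deriv (fun v => f √(A + v ^ 2)) s) =ᶠ[nhds u]
      fun s => deriv f √(A + s ^ 2) * (s / √(A + s ^ 2)) := by
    filter_upwards [hpos] with s hs
    exact ((hf _).hasDerivAt.comp s (hasDerivAt_sqrt_add_sq hs)).deriv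
  have hu := hasDerivAt_sqrt_add_sq (A := A) (u := u) (by rw [hAu]; positivity)
  have hf'' : HasDerivAt (deriv f) (deriv (deriv f) ρ) √(A + u ^ 2) := by
    rw [hsqrt]; exact hf'.hasDerivAt
  have hcomp : HasDerivAt (fun s => deriv f √(A + s ^ 2))
      (deriv (deriv f) ρ * (u / √(A + u ^ 2))) u :=
    HasDerivAt.comp (h₂ := deriv f) u hf'' hu
  have houter : HasDerivAt (fun s => deriv f √(A + s ^ 2) * (s / √(A + s ^ 2))) _ u :=
    hcomp.fun_mul ((hasDerivAt_id' u).fun_div hu (by rw [hsqrt]; exact hρ.ne'))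
  rw [hinner.deriv_eq, houter.deriv, hsqrt]
  field_simp

lemma sum_sq_update {ι : Type*} [Fintype ι] [DecidableEq ι] (x : ι → ℝ) (i : ι) (u : ℝ) :
    ∑ j, Function.update x i u j ^ 2 = ∑ j, x j ^ 2 - x i ^ 2 + u ^ 2 := by
  rw [← Finset.add_sum_erase _ _ (Finset.mem_univ i),
    ← Finset.add_sum_erase _ _ (Finset.mem_univ i),
    Finset.sum_congr rfl fun j hj => by rw [Function.update_of_ne (Finset.ne_of_mem_erase hj)],
    Function.update_self]
  ring

lemma sum_qxx_add_qnn_of_radial (g : (Fin m → ℝ) × ℝ × ℝ → ℝ) (F : ℝ → ℝ → ℝ) (a : ℝ)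
    (hg : ∀ q, g q = F √(∑ i, q.1 i ^ 2 + (q.2.1 - a) ^ 2) q.2.2)
    (x : Fin m → ℝ) (y z : ℝ) (hρ : 0 < ∑ i, x i ^ 2 + (y - a) ^ 2)
    (hF : Differentiable ℝ (F · z))
    (hF' : DifferentiableAt ℝ (deriv (F · z)) √(∑ i, x i ^ 2 + (y - a) ^ 2)) :
    ∑ i, qxx g i (x, y, z) + qnn g (x, y, z)
      = deriv (deriv (F · z)) √(∑ i, x i ^ 2 + (y - a) ^ 2)
        + m * deriv (F · z) √(∑ i, x i ^ 2 + (y - a) ^ 2) / √(∑ i, x i ^ 2 + (y - a) ^ 2) := by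
  set ρ := √(∑ i, x i ^ 2 + (y - a) ^ 2)
  have hρ_pos : 0 < ρ := Real.sqrt_pos.2 hρ
  have hρ_sq : ρ ^ 2 = ∑ i, x i ^ 2 + (y - a) ^ 2 := Real.sq_sqrt hρ.le
  have hqxx : ∀ i, qxx g i (x, y, z)
      = deriv (deriv (F · z)) ρ * x i ^ 2 / ρ ^ 2
        + deriv (F · z) ρ * (ρ ^ 2 - x i ^ 2) / ρ ^ 3 := by
    intro i
    have hline : (fun u => g (Function.update x i u, y, z))
        = fun u => F √((∑ j, x j ^ 2 - x i ^ 2 + (y - a) ^ 2) + u ^ 2) z := by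
      funext u
      rw [hg, sum_sq_update, add_right_comm]
    simp only [qxx, hline]
    exact deriv_deriv_comp_sqrt_add_sq hρ_pos (by rw [hρ_sq]; ring) hF hF'
  have hqnn : qnn g (x, y, z)
      = deriv (deriv (F · z)) ρ * (y - a) ^ 2 / ρ ^ 2
        + deriv (F · z) ρ * (ρ ^ 2 - (y - a) ^ 2) / ρ ^ 3 := by
    set h := fun v => F √(∑ i, x i ^ 2 + v ^ 2) z
    have hline : (fun u => g (x, u, z)) = fun u => h (u - a) := funext fun u => hg _
    simp only [qnn]
    rw [hline]
    simp only [deriv_comp_sub_const]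
    exact deriv_deriv_comp_sqrt_add_sq hρ_pos hρ_sq.symm hF hF'
  simp only [hqxx, hqnn, Finset.sum_add_distrib, ← Finset.sum_div, ← Finset.mul_sum,
    Finset.sum_sub_distrib, Finset.sum_const, Finset.card_univ, Fintype.card_fin, nsmul_eq_mul]
  field_simp
  linear_combination (deriv (F · z) ρ - deriv (deriv (F · z)) ρ * ρ) * hρ_sq

section Profile

variable (α : ℝ) (n : ℕ) (R : ℝ) {z : ℝ}

lemma deriv_VV_fst (hz : z ≠ 0) :
    deriv (VV α n R · z) = fun t =>
      α * UU α t z / √(t ^ 2 + z ^ 2) * (((n : ℝ) - 1) * t / R + 1)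
        + UU α t z * (((n : ℝ) - 1) / R) := by
  funext t
  exact ((hasDerivAt_UU_fst α t hz).fun_mul
    ((((hasDerivAt_id' t).const_mul _).div_const R).add_const 1)).deriv.trans (by ring)

lemma differentiable_VV_fst (hz : z ≠ 0) : Differentiable ℝ (VV α n R · z) := fun t =>
  ((hasDerivAt_UU_fst α t hz).fun_mul
    ((((hasDerivAt_id' t).const_mul _).div_const R).add_const 1)).differentiableAt

lemma hasDerivAt_deriv_VV_fst (t : ℝ) (hz : z ≠ 0) :
    HasDerivAt (deriv (VV α n R · z))
      (deriv (deriv (UU α · z)) t * (((n : ℝ) - 1) * t / R + 1)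
        + 2 * (α * UU α t z / √(t ^ 2 + z ^ 2)) * (((n : ℝ) - 1) / R)) t := by
  rw [deriv_VV_fst α n R hz, deriv_UU_fst α hz, (hasDerivAt_deriv_UU_fst α t hz).deriv]
  refine (((hasDerivAt_deriv_UU_fst α t hz).fun_mul
    ((((hasDerivAt_id' t).const_mul _).div_const R).add_const 1)).fun_add
    ((hasDerivAt_UU_fst α t hz).mul_const _)).congr_deriv ?_
  ring

end Profile

lemma weighted_laplacian_vR (α R : ℝ) (x : Fin m → ℝ) {y z t : ℝ} (hR : R ≠ 0) (hz : z ≠ 0)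
    (htR : t < R) (ht : √(∑ i, x i ^ 2 + (y - R) ^ 2) = R - t) :
    ∑ i, qxx (vR α m R) i (x, y, z) + qnn (vR α m R) (x, y, z) + qzz (vR α m R) (x, y, z)
        + (1 - 2 * α) * qz (vR α m R) (x, y, z) / z
      = m * UU α t z / (R * (R - t) * √(t ^ 2 + z ^ 2))
        * (α * (R - (2 + m) * t) - m * √(t ^ 2 + z ^ 2)) := by
  have hpos : 0 < ∑ i, x i ^ 2 + (y - R) ^ 2 := by
    rw [← Real.sqrt_pos, ht]; linarith
  have hderiv : deriv (fun ρ => VV α (m + 1) R (R - ρ) z)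
      = fun ρ => -deriv (VV α (m + 1) R · z) (R - ρ) :=
    funext fun ρ => deriv_comp_const_sub (VV α (m + 1) R · z) R ρ
  have hF : Differentiable ℝ (fun ρ => VV α (m + 1) R (R - ρ) z) :=
    (differentiable_VV_fst α (m + 1) R hz).comp (differentiable_const R |>.sub differentiable_id)
  have hF' : DifferentiableAt ℝ (deriv fun ρ => VV α (m + 1) R (R - ρ) z) (R - t) := by
    rw [hderiv]
    exact ((hasDerivAt_deriv_VV_fst α (m + 1) R (R - (R - t)) hz).differentiableAt.comp _
      (differentiableAt_const R |>.sub differentiableAt_id)).neg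
  have hUzz : deriv (deriv (UU α t ·)) z
      = -deriv (deriv (UU α · z)) t - (1 - 2 * α) * deriv (UU α t ·) z / z := by
    linear_combination UU_equation α t hz
  rw [sum_qxx_add_qnn_of_radial (vR α m R) (fun ρ z => VV α (m + 1) R (R - ρ) z) R (fun q => rfl)
    x y z hpos hF (ht ▸ hF'), ht, hderiv, deriv.fun_neg, deriv_comp_const_sub, sub_sub_cancel,
    (hasDerivAt_deriv_VV_fst α (m + 1) R t hz).deriv, deriv_VV_fst α (m + 1) R hz]
  simp only [qz, qzz, vR, VV, deriv_mul_const_field, ht, sub_sub_cancel, hUzz, Nat.cast_add_one,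
    add_sub_cancel_right]
  have hr : 0 < √(t ^ 2 + z ^ 2) := by positivity
  have hRt : R - t ≠ 0 := by linarith
  field_simp
  ring

/-- For `R` large (depending on `n = m+1` and `α`), `v_R` is a subsolution of
the weighted equation `Δ v + β v_z/z ≥ 0` on `B₂ ∖ {z = 0}` where `v_R > 0`. -/
theorem stmt_14 (m : ℕ) (α β : ℝ) (hα : α ∈ Set.Ioo (0 : ℝ) 1)
    (hβ : β = 1 - 2 * α) :
    ∃ R₀ : ℝ, ∀ R : ℝ, R₀ ≤ R →
      ∀ p : (Fin m → ℝ) × ℝ × ℝ,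
        (∑ i, p.1 i ^ 2) + p.2.1 ^ 2 + p.2.2 ^ 2 < 4 → p.2.2 ≠ 0 →
        0 < vR α m R p →
        0 ≤ (∑ i, qxx (vR α m R) i p) + qnn (vR α m R) p + qzz (vR α m R) p +
            β * qz (vR α m R) p / p.2.2 := by
  obtain ⟨hα, -⟩ := hα
  subst hβ
  refine ⟨2 * (2 + m) + 3 * m / α, fun R hR ⟨x, y, z⟩ hball hz _ => ?_⟩
  dsimp only at hball hz ⊢
  have hm : (0 : ℝ) ≤ m := m.cast_nonneg
  have hαR : 2 * (2 + m) * α + 3 * m ≤ α * R := by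
    have := mul_le_mul_of_nonneg_left hR hα.le
    rwa [mul_add, mul_div_cancel₀ _ hα.ne', mul_comm α] at this
  have hR2 : 2 < R := by linarith [show 0 ≤ 3 * (m : ℝ) / α by positivity]
  have hS : 0 ≤ ∑ i, x i ^ 2 := Finset.sum_nonneg fun i _ => sq_nonneg (x i)
  have hy : y < 2 := by nlinarith [sq_nonneg z]
  set ρ := √(∑ i, x i ^ 2 + (y - R) ^ 2)
  have hρ_ge : R - y ≤ ρ := (le_abs_self _).trans (Real.abs_le_sqrt (by linarith))
  have hρ_lt : ρ < R + 2 := (Real.sqrt_lt' (by linarith)).2 (by nlinarith)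
  have hr_lt : √((R - ρ) ^ 2 + z ^ 2) < 3 := (Real.sqrt_lt' three_pos).2 (by nlinarith)
  rw [weighted_laplacian_vR α R x (by linarith) hz (by linarith) (sub_sub_cancel R ρ).symm,
    sub_sub_cancel]
  have hr : 0 < √((R - ρ) ^ 2 + z ^ 2) := by positivity
  refine mul_nonneg (div_nonneg (mul_nonneg hm (UU_pos α _ hz).le) (by positivity)) ?_
  have := mul_le_mul_of_nonneg_left (show R - ρ ≤ 2 by linarith) (by positivity : (0 : ℝ) ≤ 2 + m)
  nlinarith [mul_le_mul_of_nonneg_left hr_lt.le hm]
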